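/- Let σ₁₁, σ₁₂, σ₂₁, σ₂₂, b₁₁, b₂₁, b₂₂, κ₁, κ₂, θ ∈ ℝ and s ∈ [0,∞). For μ ∈ ℝ, say that a differentiable function F = (F₁,F₂) : [0,∞) → ℂ² solves S(μ) if F₁′(t) = (σ₁₁²/2)·F₁(t)² − b₁₁·F₁(t) − b₂₁·F₂(t) − i·μ·κ₁·e^{−θt} − (μ²·σ₂₁²/2)·e^{−2θt} and F₂′(t) = (σ₁₂²/2)·F₂(t)² − b₂₂·F₂(t) − i·μ·κ₂·e^{−θt} − (μ²·σ₂₂²/2)·e^{−2θt} for all t ≥ 0. If F solves S(μ) and G solves S(μ·e^{−θ s}) with G(0) = F(s), then G(t) = F(t + s) for all t ≥ 0. -/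

import Mathlib

open MeasureTheory Filter Real Complex

/-!
Since `e^{-θ(t+s)} = e^{-θt} e^{-θs}`, the shifted pair `F(· + s)` solves `S(μ e^{-θs})`, and it
starts at `F(s) = G(0)`; so it suffices that `S(μ)` has at most one solution with given initial
value. The quadratic nonlinearity is only locally Lipschitz, but the difference of two solutions
of the same scalar Riccati equation solves a linear equation with continuous coefficient, which
forces it to vanish by Grönwall's inequality.
-/

/-- A pair `(F₁,F₂)` of differentiable complex-valued functions on `[0,∞)` solves the
Riccati system `S(μ)` (system (EDK)) of the double Heston model. -/
def SolvesRiccatiSystem (σ11 σ12 σ21 σ22 b11 b21 b22 κ1 κ2 θ μ : ℝ)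
    (F1 F2 : ℝ → ℂ) : Prop :=
  ∀ t : ℝ, 0 ≤ t →
    HasDerivAt F1
      ((σ11 ^ 2 / 2 : ℂ) * F1 t ^ 2 - (b11 : ℂ) * F1 t - (b21 : ℂ) * F2 t
        - Complex.I * (μ : ℂ) * (κ1 : ℂ) * (Real.exp (-θ * t) : ℂ)
        - ((μ ^ 2 * σ21 ^ 2 / 2 : ℝ) : ℂ) * (Real.exp (-2 * θ * t) : ℂ)) t ∧
    HasDerivAt F2
      ((σ12 ^ 2 / 2 : ℂ) * F2 t ^ 2 - (b22 : ℂ) * F2 t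
        - Complex.I * (μ : ℂ) * (κ2 : ℂ) * (Real.exp (-θ * t) : ℂ)
        - ((μ ^ 2 * σ22 ^ 2 / 2 : ℝ) : ℂ) * (Real.exp (-2 * θ * t) : ℂ)) t

section LinearUniqueness

variable {E : Type*} [NormedRing E] [NormedAlgebra ℝ E]

theorem eqOn_zero_of_hasDerivAt_mul {a d : ℝ → E} (ha : ContinuousOn a (Set.Ici 0))
    (hd : ∀ t, 0 ≤ t → HasDerivAt d (a t * d t) t) (h0 : d 0 = 0) :
    Set.EqOn d 0 (Set.Ici 0) := by
  intro T hT
  obtain ⟨K, hK⟩ := isCompact_Icc.exists_bound_of_continuousOn (ha.mono Set.Icc_subset_Ici_self)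
  refine eq_zero_of_abs_deriv_le_mul_abs_self_of_eq_zero_right (K := K) (a := 0) (b := T)
    (fun t ht => (hd t ht.1).continuousAt.continuousWithinAt)
    (fun t ht => (hd t ht.1).hasDerivWithinAt) h0 (fun t ht => ?_) T ⟨hT, le_rfl⟩
  exact (norm_mul_le _ _).trans (by gcongr; exact hK t (Set.Ico_subset_Icc_self ht))

end LinearUniqueness

section QuadraticUniqueness

variable {E : Type*} [NormedCommRing E] [NormedAlgebra ℝ E]

theorem eqOn_of_hasDerivAt_quadratic {c b : E} {r f g : ℝ → E}
    (hf : ∀ t, 0 ≤ t → HasDerivAt f (c * f t ^ 2 - b * f t + r t) t)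
    (hg : ∀ t, 0 ≤ t → HasDerivAt g (c * g t ^ 2 - b * g t + r t) t) (h0 : f 0 = g 0) :
    Set.EqOn f g (Set.Ici 0) := by
  -- `f - g` solves a linear equation, since `f² - g² = (f + g)(f - g)`.
  have hcont : ContinuousOn (fun t => c * (f t + g t) - b) (Set.Ici 0) := fun t ht =>
    ((continuousAt_const.mul ((hf t ht).continuousAt.add (hg t ht).continuousAt)).sub
      continuousAt_const).continuousWithinAt
  have hdiff : Set.EqOn (f - g) 0 (Set.Ici 0) :=
    eqOn_zero_of_hasDerivAt_mul hcont
      (fun t ht => ((hf t ht).sub (hg t ht)).congr_deriv (by simp only [Pi.sub_apply]; ring))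
      (sub_eq_zero.mpr h0)
  exact fun t ht => sub_eq_zero.mp (hdiff ht)

end QuadraticUniqueness

namespace SolvesRiccatiSystem

variable {σ11 σ12 σ21 σ22 b11 b21 b22 κ1 κ2 θ μ : ℝ} {F1 F2 G1 G2 : ℝ → ℂ}

theorem comp_add_const
    (hF : SolvesRiccatiSystem σ11 σ12 σ21 σ22 b11 b21 b22 κ1 κ2 θ μ F1 F2) {s : ℝ} (hs : 0 ≤ s) :
    SolvesRiccatiSystem σ11 σ12 σ21 σ22 b11 b21 b22 κ1 κ2 θ (μ * Real.exp (-θ * s))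
      (fun t => F1 (t + s)) (fun t => F2 (t + s)) := by
  intro t ht
  obtain ⟨h1, h2⟩ := hF (t + s) (by linarith)
  have e1 : Real.exp (-θ * (t + s)) = Real.exp (-θ * t) * Real.exp (-θ * s) := by
    rw [← Real.exp_add]; ring_nf
  have e2 : Real.exp (-2 * θ * (t + s))
      = Real.exp (-2 * θ * t) * (Real.exp (-θ * s) * Real.exp (-θ * s)) := by
    rw [← Real.exp_add, ← Real.exp_add]; ring_nf
  exact ⟨(h1.comp_add_const t s).congr_deriv (by push_cast [e1, e2]; ring),
    (h2.comp_add_const t s).congr_deriv (by push_cast [e1, e2]; ring)⟩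

/-- The system is triangular: `F₂` solves a scalar Riccati equation, and then so does `F₁`,
with `F₂` entering only through the forcing term. -/
theorem unique
    (hF : SolvesRiccatiSystem σ11 σ12 σ21 σ22 b11 b21 b22 κ1 κ2 θ μ F1 F2)
    (hG : SolvesRiccatiSystem σ11 σ12 σ21 σ22 b11 b21 b22 κ1 κ2 θ μ G1 G2)
    (h10 : F1 0 = G1 0) (h20 : F2 0 = G2 0) :
    Set.EqOn F1 G1 (Set.Ici 0) ∧ Set.EqOn F2 G2 (Set.Ici 0) := by
  have h2 : Set.EqOn F2 G2 (Set.Ici 0) :=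
    eqOn_of_hasDerivAt_quadratic (c := (σ12 ^ 2 / 2 : ℂ)) (b := b22)
      (r := fun t => -(Complex.I * μ * κ2 * Real.exp (-θ * t))
        - ((μ ^ 2 * σ22 ^ 2 / 2 : ℝ) : ℂ) * Real.exp (-2 * θ * t))
      (fun t ht => (hF t ht).2.congr_deriv (by ring))
      (fun t ht => (hG t ht).2.congr_deriv (by ring)) h20
  refine ⟨eqOn_of_hasDerivAt_quadratic (c := (σ11 ^ 2 / 2 : ℂ)) (b := b11)
      (r := fun t => -(b21 * F2 t) - Complex.I * μ * κ1 * Real.exp (-θ * t)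
        - ((μ ^ 2 * σ21 ^ 2 / 2 : ℝ) : ℂ) * Real.exp (-2 * θ * t))
      (fun t ht => (hF t ht).1.congr_deriv (by ring))
      (fun t ht => (hG t ht).1.congr_deriv (by rw [← h2 ht]; ring)) h10, h2⟩

end SolvesRiccatiSystem

theorem riccati_flow_property
    (σ11 σ12 σ21 σ22 b11 b21 b22 κ1 κ2 θ : ℝ) (s : ℝ) (hs : 0 ≤ s) (μ : ℝ)
    (F1 F2 G1 G2 : ℝ → ℂ)
    (hF : SolvesRiccatiSystem σ11 σ12 σ21 σ22 b11 b21 b22 κ1 κ2 θ μ F1 F2)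
    (hG : SolvesRiccatiSystem σ11 σ12 σ21 σ22 b11 b21 b22 κ1 κ2 θ
      (μ * Real.exp (-θ * s)) G1 G2)
    (hG10 : G1 0 = F1 s) (hG20 : G2 0 = F2 s) :
    ∀ t, 0 ≤ t → G1 t = F1 (t + s) ∧ G2 t = F2 (t + s) := by
  obtain ⟨h1, h2⟩ := hG.unique (hF.comp_add_const hs)
    (by rw [hG10, zero_add]) (by rw [hG20, zero_add])
  exact fun t ht => ⟨h1 ht, h2 ht⟩
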